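/- arXiv:1703.09437 — 4 statements merged into one kernel-verified Lean document; each statement's English description precedes it below -/
import Mathlib

section
/- For every real number $x \geq 1$ and every real number $t$ with $0 \leq t \leq 1$, one has $(1+t)^x \geq 1 + x\, t^x$. -/
/-- For every real `x ≥ 1` and real `t` with `0 ≤ t ≤ 1`, `(1+t)^x ≥ 1 + x * t^x`,
where powers are real (rpow) powers. -/
theorem one_add_rpow_ge_one_add_mul_rpow (x t : ℝ) (hx : 1 ≤ x)
    (ht0 : 0 ≤ t) (ht1 : t ≤ 1) :
    (1 + t) ^ x ≥ 1 + x * t ^ x := by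
  have h1 : 1 + x * t ≤ (1 + t) ^ x :=
    one_add_mul_self_le_rpow_one_add (by linarith) hx
  have h2 : t ^ x ≤ t := by
    calc t ^ x ≤ t ^ (1 : ℝ) := by
          rcases eq_or_lt_of_le ht0 with h | h
          · rw [← h]
            rw [Real.zero_rpow (by linarith), Real.rpow_one]
          · exact Real.rpow_le_rpow_of_exponent_ge h ht1 hx
      _ = t := Real.rpow_one t
  nlinarith [Real.rpow_nonneg ht0 x]
end

section
/- (Scalar form of Theorem 2.) Let $y < 0$ be a real number, let $a, c$ be real numbers with $0 < c \leq a$, and let $c_1, \dots, c_{m-1}$ be positive real numbers such that $c^y < \sum_{i=1}^{m-1} c_i^y$. Then $a^y < \frac{y}{2^y - 1} \sum_{i=1}^{m-1} c_i^y$. -/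
open Finset in
/-- Scalar form of Theorem 2: for real `y < 0`, reals `0 < c ≤ a`, and positive reals
`c₁, …, c_{m-1}` with `c^y < ∑ i, (cᵢ)^y`, one has `a^y < (y/(2^y-1)) * ∑ i, (cᵢ)^y`.
Powers are real (rpow) powers; the family is indexed by `Fin (m-1)`. -/
theorem crenoa_monogamy_scalar_neg (y a c : ℝ) (m : ℕ) (ci : Fin (m - 1) → ℝ)
    (hy : y < 0) (hc : 0 < c) (hca : c ≤ a) (hci : ∀ i, 0 < ci i)
    (hmono : c ^ y < ∑ i, (ci i) ^ y) :
    a ^ y < y / (2 ^ y - 1) * ∑ i, (ci i) ^ y := by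
  have hS : (0:ℝ) < ∑ i, (ci i) ^ y :=
    lt_of_le_of_lt (Real.rpow_pos_of_pos hc y).le hmono
  have h1 : a ^ y ≤ c ^ y := Real.rpow_le_rpow_of_nonpos hc hca hy.le
  have h2 : (2:ℝ) ^ y < 1 := Real.rpow_lt_one_of_one_lt_of_neg (by norm_num) hy
  have hden : (2:ℝ) ^ y - 1 < 0 := by linarith
  have hlog : Real.log 2 < 1 := by
    have := Real.log_lt_sub_one_of_pos (x := 2) (by norm_num) (by norm_num)
    linarith
  have hexp : y * Real.log 2 + 1 ≤ (2:ℝ) ^ y := by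
    rw [Real.rpow_def_of_pos (by norm_num), mul_comm]
    exact Real.add_one_le_exp _
  have hy2 : y < 2 ^ y - 1 := by nlinarith [mul_lt_mul_of_neg_left hlog hy]
  have hfac : 1 < y / (2 ^ y - 1) := by
    rw [lt_div_iff_of_neg hden]; linarith
  calc a ^ y ≤ c ^ y := h1
    _ < ∑ i, (ci i) ^ y := hmono
    _ < y / (2 ^ y - 1) * ∑ i, (ci i) ^ y := by nlinarith
end

section
/- For every real number $\alpha$ with $(\sqrt{7}-1)/2 \leq \alpha \leq (\sqrt{13}-1)/2$ and $\alpha \neq 1$, the function $f_\alpha$ is monotonically increasing on the interval $[0,1]$: for all $0 \leq x \leq y \leq 1$, $f_\alpha(x) \leq f_\alpha(y)$. -/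
/-- The function expressing the Rényi-α entanglement of a two-qubit state as a function of
its squared concurrence:
`f_α(x) = (1/(1-α)) * log₂ [ ((1-√(1-x))/2)^α + ((1+√(1-x))/2)^α ]`. -/
noncomputable def renyiF (α x : ℝ) : ℝ :=
  (1 / (1 - α)) *
    Real.logb 2 (((1 - Real.sqrt (1 - x)) / 2) ^ α + ((1 + Real.sqrt (1 - x)) / 2) ^ α)

private lemma renyiH_continuousOn (α : ℝ) (hα0 : 0 < α) :
    ContinuousOn (fun s : ℝ => s ^ α + (1 - s) ^ α) (Set.Icc 0 (1/2)) := by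
  have h1 : Continuous fun s : ℝ => s ^ α :=
    continuous_iff_continuousAt.mpr fun x => Real.continuousAt_rpow_const x α (Or.inr hα0.le)
  exact (h1.add (h1.comp (continuous_const.sub continuous_id))).continuousOn

private lemma renyiH_hasDerivAt (α s : ℝ) (hs : s ∈ Set.Ioo (0:ℝ) (1/2)) :
    HasDerivAt (fun s : ℝ => s ^ α + (1 - s) ^ α)
      (α * s ^ (α - 1) + α * (1 - s) ^ (α - 1) * (-1)) s := by
  have h1 : HasDerivAt (fun s : ℝ => s ^ α) (α * s ^ (α - 1)) s :=
    Real.hasDerivAt_rpow_const (Or.inl hs.1.ne')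
  have hne : (1 : ℝ) - s ≠ 0 := by have := hs.2; intro h; rw [sub_eq_zero] at h; linarith
  have hinner : HasDerivAt (fun s : ℝ => 1 - s) (-1) s := by
    simpa using (hasDerivAt_id s).const_sub 1
  have h2 : HasDerivAt (fun s : ℝ => (1 - s) ^ α) (α * (1 - s) ^ (α - 1) * (-1)) s :=
    (Real.hasDerivAt_rpow_const (x := 1 - s) (Or.inl hne)).comp s hinner
  exact h1.add h2

private lemma renyiH_mono (α : ℝ) (hα0 : 0 < α) (hα1 : α < 1) :
    MonotoneOn (fun s : ℝ => s ^ α + (1 - s) ^ α) (Set.Icc 0 (1/2)) := by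
  apply monotoneOn_of_deriv_nonneg (convex_Icc _ _) (renyiH_continuousOn α hα0)
  · intro s hs
    rw [interior_Icc] at hs
    exact (renyiH_hasDerivAt α s hs).differentiableAt.differentiableWithinAt
  · intro s hs
    rw [interior_Icc] at hs
    rw [(renyiH_hasDerivAt α s hs).deriv]
    have hkey : (1 - s) ^ (α - 1) ≤ s ^ (α - 1) :=
      Real.rpow_le_rpow_of_nonpos hs.1 (by linarith [hs.2]) (by linarith)
    nlinarith [Real.rpow_nonneg (le_of_lt hs.1) (α - 1)]

private lemma renyiH_anti (α : ℝ) (hα1 : 1 < α) :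
    AntitoneOn (fun s : ℝ => s ^ α + (1 - s) ^ α) (Set.Icc 0 (1/2)) := by
  apply antitoneOn_of_deriv_nonpos (convex_Icc _ _) (renyiH_continuousOn α (by linarith))
  · intro s hs
    rw [interior_Icc] at hs
    exact (renyiH_hasDerivAt α s hs).differentiableAt.differentiableWithinAt
  · intro s hs
    rw [interior_Icc] at hs
    rw [(renyiH_hasDerivAt α s hs).deriv]
    have hkey : s ^ (α - 1) ≤ (1 - s) ^ (α - 1) :=
      Real.rpow_le_rpow (le_of_lt hs.1) (by linarith [hs.2]) (by linarith)
    nlinarith [Real.rpow_nonneg (le_of_lt hs.1) (α - 1)]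

private lemma renyiH_pos (α s : ℝ) (hs : s ∈ Set.Icc (0:ℝ) (1/2)) :
    0 < s ^ α + (1 - s) ^ α := by
  have h1 : (0:ℝ) < (1 - s) ^ α := Real.rpow_pos_of_pos (by linarith [hs.2]) α
  have h2 : (0:ℝ) ≤ s ^ α := Real.rpow_nonneg hs.1 α
  linarith

/-- For `(√7-1)/2 ≤ α ≤ (√13-1)/2`, `α ≠ 1`, the function `f_α` is monotonically
increasing on `[0,1]`. -/
theorem renyiF_monotoneOn (α : ℝ) (hα1 : (Real.sqrt 7 - 1) / 2 ≤ α)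
    (hα2 : α ≤ (Real.sqrt 13 - 1) / 2) (hα : α ≠ 1) :
    ∀ x y : ℝ, 0 ≤ x → x ≤ y → y ≤ 1 → renyiF α x ≤ renyiF α y := by
  have hsqrt7 : (2:ℝ) ≤ Real.sqrt 7 := by
    rw [show (2:ℝ) = Real.sqrt 4 by rw [show (4:ℝ) = 2^2 by norm_num, Real.sqrt_sq]; norm_num]
    exact Real.sqrt_le_sqrt (by norm_num)
  have hα0 : 0 < α := by linarith
  intro x y hx hxy hy1
  -- the substitution u(x) = (1-√(1-x))/2
  set u := (1 - Real.sqrt (1 - x)) / 2 with hu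
  set v := (1 - Real.sqrt (1 - y)) / 2 with hv
  have hsx0 : 0 ≤ Real.sqrt (1 - x) := Real.sqrt_nonneg _
  have hsy0 : 0 ≤ Real.sqrt (1 - y) := Real.sqrt_nonneg _
  have hsx1 : Real.sqrt (1 - x) ≤ 1 := Real.sqrt_le_one.mpr (by linarith)
  have hsy1 : Real.sqrt (1 - y) ≤ 1 := Real.sqrt_le_one.mpr (by linarith)
  have hsle : Real.sqrt (1 - y) ≤ Real.sqrt (1 - x) := Real.sqrt_le_sqrt (by linarith)
  have hmemu : u ∈ Set.Icc (0:ℝ) (1/2) := ⟨by rw [hu]; linarith, by rw [hu]; linarith⟩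
  have hmemv : v ∈ Set.Icc (0:ℝ) (1/2) := ⟨by rw [hv]; linarith, by rw [hv]; linarith⟩
  have huv : u ≤ v := by rw [hu, hv]; linarith
  have hfx : renyiF α x = (1 / (1 - α)) * Real.logb 2 (u ^ α + (1 - u) ^ α) := by
    rw [renyiF]; congr 3; rw [hu]; ring
  have hfy : renyiF α y = (1 / (1 - α)) * Real.logb 2 (v ^ α + (1 - v) ^ α) := by
    rw [renyiF]; congr 3; rw [hv]; ring
  rw [hfx, hfy]
  have hpu := renyiH_pos α u hmemu
  have hpv := renyiH_pos α v hmemv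
  rcases lt_or_gt_of_ne hα with hlt | hgt
  · -- α < 1
    have hH := renyiH_mono α hα0 hlt hmemu hmemv huv
    have hlog : Real.logb 2 (u ^ α + (1 - u) ^ α) ≤ Real.logb 2 (v ^ α + (1 - v) ^ α) :=
      Real.logb_le_logb_of_le one_lt_two hpu hH
    have hc : (0:ℝ) ≤ 1 / (1 - α) := le_of_lt (div_pos one_pos (by linarith))
    exact mul_le_mul_of_nonneg_left hlog hc
  · -- α > 1
    have hH := renyiH_anti α hgt hmemu hmemv huv
    have hlog : Real.logb 2 (v ^ α + (1 - v) ^ α) ≤ Real.logb 2 (u ^ α + (1 - u) ^ α) :=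
      Real.logb_le_logb_of_le one_lt_two hpv hH
    have hc : 1 / (1 - α) ≤ (0:ℝ) := by
      apply div_nonpos_of_nonneg_of_nonpos <;> linarith
    exact mul_le_mul_of_nonpos_left hlog hc
end

section
/- For every real number $\alpha$ with $(\sqrt{7}-1)/2 \leq \alpha \leq (\sqrt{13}-1)/2$ and $\alpha \neq 1$, the function $f_\alpha$ is concave on the interval $[0,1]$: for all $x, y \in [0,1]$ and all $t \in [0,1]$, $f_\alpha(t x + (1-t) y) \geq t f_\alpha(x) + (1-t) f_\alpha(y)$. -/
/-!
Put `s = √(1 - x)` and `p, q = (1 ∓ s) / 2`, so that `f_α = log (p^α + q^α) / ((1 - α) log 2)`.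
Then `f_α'(x) = α / (4 log 2) · R(s)` with `R(s) = (q^(α-1) - p^(α-1)) / ((α - 1) s (p^α + q^α))`,
and since `s` decreases with `x`, concavity amounts to `R` being nondecreasing on `(0, 1)`.
The numerator of `R'` is homogeneous in `(p, q)`; writing `p, q = √(pq) e^(∓θ)` turns it into a
positive multiple of `β (β sinh 3θ + (β + 4) sinh θ - 3 sinh (1 + 2β)θ - sinh (1 - 2β)θ)`,
`β = α - 1`. For `-1/5 ≤ β` and `β² + 3β ≤ 1` every Taylor coefficient of this function is
nonnegative, by an induction `n → n + 2` on the odd degree `n`.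
-/

open Real Set

noncomputable def sinhComb (β θ : ℝ) : ℝ :=
  β * sinh (3 * θ) + (β + 4) * sinh θ - 3 * sinh ((1 + 2 * β) * θ) - sinh ((1 - 2 * β) * θ)

def sinhCombCoeff (β : ℝ) (n : ℕ) : ℝ :=
  β * 3 ^ n + (β + 4) - 3 * (1 + 2 * β) ^ n - (1 - 2 * β) ^ n

lemma hasSum_sinhComb (β θ : ℝ) :
    HasSum (fun k : ℕ => sinhCombCoeff β (2 * k + 1) * (θ ^ (2 * k + 1) / (2 * k + 1).factorial))
      (sinhComb β θ) := by
  refine ((((hasSum_sinh (3 * θ)).mul_left β).add ((hasSum_sinh θ).mul_left (β + 4))).sub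
    ((hasSum_sinh ((1 + 2 * β) * θ)).mul_left 3)).sub (hasSum_sinh ((1 - 2 * β) * θ))
    |>.congr_fun fun k => ?_
  simp only [sinhCombCoeff, mul_pow]
  ring

lemma sinhCombCoeff_add_two (β : ℝ) (n : ℕ) :
    sinhCombCoeff β (n + 2) = (1 + 2 * β) ^ 2 * sinhCombCoeff β n
      + β * ((9 - (1 + 2 * β) ^ 2) * 3 ^ n + 8 * (1 - 2 * β) ^ n - 4 * (β + 4) * (β + 1)) := by
  simp only [sinhCombCoeff]
  ring

lemma sinhCombCoeff_increment_nonneg {β : ℝ} (h₀ : -(1 / 5) ≤ β) (h₁ : β ^ 2 + 3 * β ≤ 1)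
    (k : ℕ) :
    0 ≤ (9 - (1 + 2 * β) ^ 2) * 3 ^ (2 * k + 1) + 8 * (1 - 2 * β) ^ (2 * k + 1)
      - 4 * (β + 4) * (β + 1) := by
  have hβ : β ≤ 1 / 3 := by nlinarith
  rcases k with _ | k
  · norm_num
    nlinarith
  · have h27 : (27 : ℝ) ≤ 3 ^ (2 * (k + 1) + 1) :=
      calc (27 : ℝ) = 3 ^ 3 := by norm_num
        _ ≤ 3 ^ (2 * (k + 1) + 1) := pow_le_pow_right₀ (by norm_num) (by omega)
    have : 0 ≤ (1 - 2 * β) ^ (2 * (k + 1) + 1) := pow_nonneg (by linarith) _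
    nlinarith

lemma mul_sinhCombCoeff_nonneg {β : ℝ} (h₀ : -(1 / 5) ≤ β) (h₁ : β ^ 2 + 3 * β ≤ 1) (k : ℕ) :
    0 ≤ β * sinhCombCoeff β (2 * k + 1) := by
  induction k with
  | zero => exact le_of_eq (by simp only [sinhCombCoeff]; ring)
  | succ k ih =>
    rw [show 2 * (k + 1) + 1 = 2 * k + 1 + 2 by ring, sinhCombCoeff_add_two, mul_add,
      mul_left_comm, ← mul_assoc β β]
    exact add_nonneg (mul_nonneg (sq_nonneg _) ih)
      (mul_nonneg (mul_self_nonneg β) (sinhCombCoeff_increment_nonneg h₀ h₁ k))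

lemma mul_sinhComb_nonneg {β θ : ℝ} (h₀ : -(1 / 5) ≤ β) (h₁ : β ^ 2 + 3 * β ≤ 1)
    (hθ : 0 ≤ θ) : 0 ≤ β * sinhComb β θ :=
  ((hasSum_sinhComb β θ).mul_left β).nonneg fun k => by
    rw [← mul_assoc]
    exact mul_nonneg (mul_sinhCombCoeff_nonneg h₀ h₁ k) (by positivity)

noncomputable def slopeDerivNumerator (α p q : ℝ) : ℝ :=
  (α - 1) * ((α - 1) * (q - p) * (p ^ (α - 2) + q ^ (α - 2)) * (p ^ α + q ^ α)
    - 2 * (q ^ (α - 1) - p ^ (α - 1)) * (p ^ α + q ^ α)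
    - α * (q - p) * (q ^ (α - 1) - p ^ (α - 1)) ^ 2)

lemma slopeDerivNumerator_nonneg {α p q : ℝ} (h₀ : 4 / 5 ≤ α) (h₁ : α ^ 2 + α ≤ 3)
    (hp : 0 < p) (hpq : p ≤ q) : 0 ≤ slopeDerivNumerator α p q := by
  have hq : 0 < q := hp.trans_le hpq
  set θ := log (q / p) / 2
  set u := exp θ
  set v := exp ((α - 1) * θ)
  have hθ : 0 ≤ θ := div_nonneg (log_nonneg ((one_le_div hp).2 hpq)) zero_le_two
  have hq_eq : q = p * u ^ 2 := by
    rw [← exp_nat_mul, show ((2 : ℕ) : ℝ) * θ = log (q / p) by push_cast; ring,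
      exp_log (by positivity)]
    field_simp
  have hu2 : (u ^ 2) ^ α = u ^ 2 * v ^ 2 := by
    rw [sq, ← exp_add, ← exp_mul, show (θ + θ) * α = θ + θ + ((α - 1) * θ + (α - 1) * θ) by ring,
      exp_add, exp_add, exp_add]
    ring
  have e₁ : exp (3 * θ) = u ^ 3 := by
    rw [show 3 * θ = θ + θ + θ by ring, exp_add, exp_add]; ring
  have e₂ : exp ((1 + 2 * (α - 1)) * θ) = u * v ^ 2 := by
    rw [show (1 + 2 * (α - 1)) * θ = θ + (α - 1) * θ + (α - 1) * θ by ring, exp_add, exp_add]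
    ring
  have e₃ : exp ((1 - 2 * (α - 1)) * θ) = u / v ^ 2 := by
    rw [show (1 - 2 * (α - 1)) * θ = θ - (α - 1) * θ - (α - 1) * θ by ring, exp_sub, exp_sub]
    ring
  have E := mul_sinhComb_nonneg (by linarith : -(1 / 5) ≤ α - 1)
    (by nlinarith : (α - 1) ^ 2 + 3 * (α - 1) ≤ 1) hθ
  simp only [sinhComb, sinh_eq, exp_neg] at E
  rw [e₁, e₂, e₃, show exp θ = u from rfl] at E
  rw [slopeDerivNumerator, rpow_sub_one hp.ne', rpow_sub_one hq.ne', rpow_sub hp, rpow_sub hq,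
    rpow_two, rpow_two, hq_eq, mul_rpow hp.le (by positivity), hu2]
  have hu : 0 < u := exp_pos _
  have hv : 0 < v := exp_pos _
  -- the prefactor is `2 (pq) ^ (α - 1/2)`, by homogeneity of degree `2α - 1`
  refine le_of_le_of_eq (mul_nonneg (by positivity : 0 ≤ 2 * (p ^ α) ^ 2 * u * v ^ 2 / p) E) ?_
  field_simp
  ring

lemma hasDerivAt_half_one_add_rpow (γ : ℝ) {s : ℝ} (hs : -1 < s) :
    HasDerivAt (fun t => ((1 + t) / 2) ^ γ) (γ / 2 * ((1 + s) / 2) ^ (γ - 1)) s := by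
  refine ((((hasDerivAt_id' s).const_add 1).div_const 2).rpow_const (p := γ)
    (Or.inl (by linarith))).congr_deriv ?_
  ring

lemma hasDerivAt_half_one_sub_rpow (γ : ℝ) {s : ℝ} (hs : s < 1) :
    HasDerivAt (fun t => ((1 - t) / 2) ^ γ) (-(γ / 2 * ((1 - s) / 2) ^ (γ - 1))) s := by
  refine ((((hasDerivAt_id' s).const_sub 1).div_const 2).rpow_const (p := γ)
    (Or.inl (by linarith))).congr_deriv ?_
  ring

noncomputable def schmidtPowerSum (α s : ℝ) : ℝ := ((1 - s) / 2) ^ α + ((1 + s) / 2) ^ α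

lemma schmidtPowerSum_pos (α : ℝ) {s : ℝ} (hs : s ∈ Ioo (-1) 1) : 0 < schmidtPowerSum α s :=
  add_pos (rpow_pos_of_pos (by linarith [hs.2]) _) (rpow_pos_of_pos (by linarith [hs.1]) _)

lemma hasDerivAt_schmidtPowerSum (α : ℝ) {s : ℝ} (hs : s ∈ Ioo (-1) 1) :
    HasDerivAt (schmidtPowerSum α)
      (α / 2 * (((1 + s) / 2) ^ (α - 1) - ((1 - s) / 2) ^ (α - 1))) s := by
  refine ((hasDerivAt_half_one_sub_rpow α hs.2).add
    (hasDerivAt_half_one_add_rpow α hs.1)).congr_deriv ?_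
  ring

noncomputable def renyiSlope (α s : ℝ) : ℝ :=
  (((1 + s) / 2) ^ (α - 1) - ((1 - s) / 2) ^ (α - 1)) / ((α - 1) * s * schmidtPowerSum α s)

lemma hasDerivAt_renyiSlope {α s : ℝ} (hα : α ≠ 1) (hs : s ∈ Ioo 0 1) :
    HasDerivAt (renyiSlope α)
      (slopeDerivNumerator α ((1 - s) / 2) ((1 + s) / 2)
        / (2 * (α - 1) ^ 2 * s ^ 2 * schmidtPowerSum α s ^ 2)) s := by
  have hs' : s ∈ Ioo (-1) 1 := ⟨by linarith [hs.1], hs.2⟩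
  have hN := schmidtPowerSum_pos α hs'
  have hα' : α - 1 ≠ 0 := sub_ne_zero.2 hα
  have hs₀ : s ≠ 0 := hs.1.ne'
  have hnum := (hasDerivAt_half_one_add_rpow (α - 1) hs'.1).fun_sub
    (hasDerivAt_half_one_sub_rpow (α - 1) hs'.2)
  have hden := ((hasDerivAt_id' s).const_mul (α - 1)).fun_mul (hasDerivAt_schmidtPowerSum α hs')
  refine (hnum.div hden (mul_ne_zero (mul_ne_zero hα' hs₀) hN.ne')).congr_deriv ?_
  rw [slopeDerivNumerator,
    show ((1 - s) / 2) ^ α + ((1 + s) / 2) ^ α = schmidtPowerSum α s from rfl,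
    show α - 1 - 1 = α - 2 by ring]
  field_simp
  ring

lemma monotoneOn_renyiSlope {α : ℝ} (h₀ : 4 / 5 ≤ α) (h₁ : α ^ 2 + α ≤ 3) (hα : α ≠ 1) :
    MonotoneOn (renyiSlope α) (Ioo 0 1) := by
  refine monotoneOn_of_hasDerivWithinAt_nonneg (convex_Ioo 0 1)
    (fun s hs => (hasDerivAt_renyiSlope hα hs).continuousAt.continuousWithinAt)
    (fun s hs => (hasDerivAt_renyiSlope hα (interior_subset hs)).hasDerivWithinAt) fun s hs => ?_
  rw [interior_Ioo] at hs
  have := schmidtPowerSum_pos α ⟨by linarith [hs.1], hs.2⟩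
  exact div_nonneg (slopeDerivNumerator_nonneg h₀ h₁ (by linarith [hs.2]) (by linarith [hs.1]))
    (by positivity)

lemma renyiF_eq (α x : ℝ) :
    renyiF α x = log (schmidtPowerSum α √(1 - x)) / ((1 - α) * log 2) := by
  rw [renyiF, logb, schmidtPowerSum, one_div_mul_eq_div, div_div, mul_comm (log 2)]

lemma sqrt_one_sub_mem_Ioo {x : ℝ} (hx : x ∈ Ioo 0 1) : √(1 - x) ∈ Ioo 0 1 :=
  ⟨sqrt_pos.2 (by linarith [hx.2]), (sqrt_lt' one_pos).2 (by linarith [hx.1])⟩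

lemma hasDerivAt_renyiF {α x : ℝ} (hα : α ≠ 1) (hx : x ∈ Ioo 0 1) :
    HasDerivAt (renyiF α) (α / (4 * log 2) * renyiSlope α √(1 - x)) x := by
  obtain ⟨hs₀, hs₁⟩ := sqrt_one_sub_mem_Ioo hx
  have hs' : √(1 - x) ∈ Ioo (-1) 1 := ⟨by linarith, hs₁⟩
  have hN := schmidtPowerSum_pos α hs'
  have hsqrt : HasDerivAt (fun y => √(1 - y)) (-1 / (2 * √(1 - x))) x :=
    ((hasDerivAt_id' x).const_sub 1).sqrt (by linarith [hx.2]) |>.congr_deriv (by ring)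
  have hα' : 1 - α ≠ 0 := sub_ne_zero.2 hα.symm
  have hlog2 : log 2 ≠ 0 := (log_pos one_lt_two).ne'
  rw [show renyiF α = _ from funext (renyiF_eq α)]
  have hcomp := (hasDerivAt_schmidtPowerSum α hs').comp x hsqrt
  refine ((hcomp.log hN.ne').div_const _).congr_deriv ?_
  rw [renyiSlope, Function.comp_apply]
  field_simp
  ring

lemma continuousOn_renyiF {α : ℝ} (hα : 0 ≤ α) : ContinuousOn (renyiF α) (Icc 0 1) := by
  intro x hx
  have hs : √(1 - x) ≤ 1 := sqrt_le_one.2 (by linarith [hx.1])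
  have hN : schmidtPowerSum α √(1 - x) ≠ 0 :=
    (add_pos_of_nonneg_of_pos (rpow_nonneg (by linarith) _)
      (rpow_pos_of_pos (by linarith [sqrt_nonneg (1 - x)]) _)).ne'
  rw [show renyiF α = _ from funext (renyiF_eq α)]
  refine ContinuousAt.continuousWithinAt ?_
  unfold schmidtPowerSum at hN ⊢
  fun_prop (disch := first | assumption | exact Or.inr hα)

theorem concaveOn_renyiF {α : ℝ} (h₀ : 4 / 5 ≤ α) (h₁ : α ^ 2 + α ≤ 3) (hα : α ≠ 1) :
    ConcaveOn ℝ (Icc 0 1) (renyiF α) := by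
  refine AntitoneOn.concaveOn_of_deriv (convex_Icc 0 1) (continuousOn_renyiF (by linarith))
    (fun x hx => ?_) fun x hx y hy hxy => ?_
  all_goals rw [interior_Icc] at *
  · exact (hasDerivAt_renyiF hα hx).differentiableAt.differentiableWithinAt
  · rw [(hasDerivAt_renyiF hα hx).deriv, (hasDerivAt_renyiF hα hy).deriv]
    refine mul_le_mul_of_nonneg_left (monotoneOn_renyiSlope h₀ h₁ hα (sqrt_one_sub_mem_Ioo hy)
      (sqrt_one_sub_mem_Ioo hx) (sqrt_le_sqrt (by linarith))) ?_
    have := log_pos one_lt_two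
    positivity

/-- For `(√7-1)/2 ≤ α ≤ (√13-1)/2`, `α ≠ 1`, the function `f_α` is concave on `[0,1]`. -/
theorem renyiF_concaveOn (α : ℝ) (hα1 : (Real.sqrt 7 - 1) / 2 ≤ α)
    (hα2 : α ≤ (Real.sqrt 13 - 1) / 2) (hα : α ≠ 1) :
    ∀ x y t : ℝ, x ∈ Set.Icc (0:ℝ) 1 → y ∈ Set.Icc (0:ℝ) 1 → t ∈ Set.Icc (0:ℝ) 1 →
      renyiF α (t * x + (1 - t) * y) ≥ t * renyiF α x + (1 - t) * renyiF α y := by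
  have h₀ : 4 / 5 ≤ α := by
    have : 13 / 5 ≤ √7 := (le_sqrt (by norm_num) (by norm_num)).2 (by norm_num)
    linarith
  have h₁ : α ^ 2 + α ≤ 3 := by
    nlinarith [sq_sqrt (show (0 : ℝ) ≤ 13 by norm_num), sqrt_nonneg 13]
  intro x y t hx hy ht
  simpa using (concaveOn_renyiF h₀ h₁ hα).2 hx hy ht.1 (sub_nonneg.2 ht.2) (add_sub_cancel t 1)
end
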